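/- arXiv:2603.25208 — 3 statements merged into one kernel-verified Lean document; each statement's English description precedes it below -/
import Mathlib

section
/- Let (Ω, ℱ, ℙ, σ) be a measure-preserving dynamical system, let f : Ω → ℋ be the generator of a random circle homeomorphism, and let F be its standard lift (the unique lift with F_ω(0) ∈ [0,1) for every ω). Then for every x₀ ∈ [0,1), every ω ∈ Ω and every n ∈ ℕ with n ≥ 1, |(1/n) F^(n)_ω(x₀) − B_f(n, ω, x₀)| < 1/n. -/
open MeasureTheory

/-- Iterated composition of a random lift:
`iterLift σ F n ω = F_{σ^{n-1} ω} ∘ ⋯ ∘ F_{σ ω} ∘ F_ω`. -/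
def iterLift {Ω : Type*} (σ : Ω → Ω) (F : Ω → ℝ → ℝ) : ℕ → Ω → ℝ → ℝ
  | 0, _, x => x
  | n + 1, ω, x => iterLift σ F n (σ ω) (F ω x)

/-- Iterated composition of the induced interval maps `f̂_ω = Int.fract ∘ F_ω` on `[0,1)`:
`iterHat σ F n ω = f̂_{σ^{n-1} ω} ∘ ⋯ ∘ f̂_ω`. -/
noncomputable def iterHat {Ω : Type*} (σ : Ω → Ω) (F : Ω → ℝ → ℝ) : ℕ → Ω → ℝ → ℝ
  | 0, _, x => x
  | n + 1, ω, x => iterHat σ F n (σ ω) (Int.fract (F ω x))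

/-- `S_ω`, the indicator function of the right interval `J_ω`, where
`J_ω = [c_ω, 1)` if `f̂_ω(0) ≠ 0` and `J_ω = ∅` if `f̂_ω(0) = 0`, and where
`c_ω = f_ω⁻¹(0)` is described by the data `c : Ω → ℝ`. -/
noncomputable def rightInd {Ω : Type*} (F : Ω → ℝ → ℝ) (c : Ω → ℝ) (ω : Ω) : ℝ → ℝ :=
  Set.indicator (if Int.fract (F ω 0) ≠ 0 then Set.Ico (c ω) 1 else (∅ : Set ℝ)) fun _ => 1

/-- The `n`-th binary coding frequency
`B_f(n, ω, x₀) = (1/n) ∑_{k=0}^{n-1} S_{σ^k ω}(f̂^{(k)}_ω(x₀))`. -/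
noncomputable def binFreq {Ω : Type*} (σ : Ω → Ω) (F : Ω → ℝ → ℝ) (c : Ω → ℝ)
    (n : ℕ) (ω : Ω) (x₀ : ℝ) : ℝ :=
  (∑ k ∈ Finset.range n, rightInd F c (σ^[k] ω) (iterHat σ F k ω x₀)) / n

/-! Writing `F_ω(x) = f̂_ω(x) + ⌊F_ω(x)⌋` and using `F_ω(x + m) = F_ω(x) + m` for integers `m`,
the lifted orbit splits as `F⁽ⁿ⁾_ω(x₀) = f̂⁽ⁿ⁾_ω(x₀) + ∑_{k<n} ⌊F_{σᵏω}(f̂⁽ᵏ⁾_ω(x₀))⌋`.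
For the standard lift and `x ∈ [0,1)` one has `F_ω(x) ∈ [F_ω(0), F_ω(0) + 1)` with
`F_ω(0) ∈ [0,1)`, so `⌊F_ω(x)⌋` is `1` exactly when `x` lies at or past the preimage `c_ω` of
the integer `1`, i.e. `⌊F_ω(x)⌋ = S_ω(x)`. Hence `n` times the difference in the theorem is
`f̂⁽ⁿ⁾_ω(x₀) ∈ [0,1)`. -/

section

variable {Ω : Type*} (σ : Ω → Ω) {F : Ω → ℝ → ℝ}

theorem iterLift_add_intCast (hdeg : ∀ ω (x : ℝ), F ω (x + 1) = F ω x + 1) :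
    ∀ (n : ℕ) (ω : Ω) (x : ℝ) (m : ℤ), iterLift σ F n ω (x + m) = iterLift σ F n ω x + m
  | 0, _, _, _ => rfl
  | n + 1, ω, x, m => by
    have hF : F ω (x + m) = F ω x + m :=
      AddConstMapClass.map_add_int (⟨F ω, hdeg ω⟩ : AddConstMap ℝ ℝ 1 1) x m
    simp only [iterLift, hF, iterLift_add_intCast hdeg n (σ ω) (F ω x) m]

theorem iterLift_eq_iterHat_add_sum_floor (hdeg : ∀ ω (x : ℝ), F ω (x + 1) = F ω x + 1) :
    ∀ (n : ℕ) (ω : Ω) (x : ℝ), iterLift σ F n ω x =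
      iterHat σ F n ω x + ∑ k ∈ Finset.range n, (⌊F (σ^[k] ω) (iterHat σ F k ω x)⌋ : ℝ)
  | 0, _, _ => by simp [iterLift, iterHat]
  | n + 1, ω, x => by
    have hsplit : iterLift σ F (n + 1) ω x =
        iterLift σ F n (σ ω) (Int.fract (F ω x)) + ⌊F ω x⌋ := by
      rw [← iterLift_add_intCast σ hdeg, Int.fract_add_floor, iterLift]
    rw [hsplit, iterLift_eq_iterHat_add_sum_floor hdeg n (σ ω), Finset.sum_range_succ']
    simp only [iterHat, Function.iterate_succ_apply, Function.iterate_zero_apply]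
    ring

theorem iterHat_mem_Ico {x : ℝ} (hx : x ∈ Set.Ico (0 : ℝ) 1) :
    ∀ (n : ℕ) (ω : Ω), iterHat σ F n ω x ∈ Set.Ico (0 : ℝ) 1
  | 0, _ => hx
  | n + 1, ω => by
    rw [iterHat]
    exact iterHat_mem_Ico ⟨Int.fract_nonneg _, Int.fract_lt_one _⟩ n (σ ω)

end

theorem eq_one_of_fract_eq_zero {a : ℝ} (ha : Int.fract a = 0) (h0 : 0 < a) (h2 : a < 2) :
    a = 1 := by
  obtain ⟨m, rfl⟩ := Int.fract_eq_zero_iff.mp ha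
  have : m = 1 := by
    have : (0 : ℤ) < m ∧ m < 2 := ⟨by exact_mod_cast h0, by exact_mod_cast h2⟩
    omega
  simp [this]

theorem floor_eq_rightInd {Ω : Type*} {F : Ω → ℝ → ℝ} {c : Ω → ℝ} {ω : Ω} {x : ℝ}
    (hmono : StrictMono (F ω)) (hdeg : F ω 1 = F ω 0 + 1) (hstd : F ω 0 ∈ Set.Ico (0 : ℝ) 1)
    (hc : c ω ∈ Set.Ico (0 : ℝ) 1) (hcF : Int.fract (F ω (c ω)) = 0)
    (hx : x ∈ Set.Ico (0 : ℝ) 1) :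
    (⌊F ω x⌋ : ℝ) = rightInd F c ω x := by
  have hlow : F ω 0 ≤ F ω x := hmono.monotone hx.1
  have hupp : F ω x < F ω 0 + 1 := hdeg ▸ hmono hx.2
  have hfract0 : Int.fract (F ω 0) = F ω 0 := Int.fract_eq_self.mpr hstd
  by_cases h0 : Int.fract (F ω 0) = 0
  · have hfloor : ⌊F ω x⌋ = 0 := Int.floor_eq_zero_iff.mpr ⟨by linarith, by linarith⟩
    simp [rightInd, h0, hfloor]
  · have hpos : 0 < F ω 0 := lt_of_le_of_ne hstd.1 (fun h => h0 (hfract0.trans h.symm))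
    have hFc : F ω (c ω) = 1 :=
      eq_one_of_fract_eq_zero hcF (hpos.trans_le (hmono.monotone hc.1))
        (by linarith [hdeg ▸ hmono hc.2, hstd.2])
    simp only [rightInd, if_pos h0, Set.indicator_apply, Set.mem_Ico, hx.2, and_true]
    split_ifs with hxc
    · have : F ω (c ω) ≤ F ω x := hmono.monotone hxc
      have hfloor : ⌊F ω x⌋ = 1 := Int.floor_eq_iff.mpr ⟨by push_cast; linarith, by
        push_cast; linarith [hstd.2]⟩
      simp [hfloor]
    · have : F ω x < F ω (c ω) := hmono (not_le.mp hxc)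
      have hfloor : ⌊F ω x⌋ = 0 := Int.floor_eq_zero_iff.mpr ⟨by linarith, by linarith⟩
      simp [hfloor]

theorem binary_coding_error_bound_general
    {Ω : Type*} (σ : Ω → Ω) (F : Ω → ℝ → ℝ) (hmono : ∀ ω, StrictMono (F ω))
    (hdeg : ∀ ω (x : ℝ), F ω (x + 1) = F ω x + 1)
    (hstd : ∀ ω, F ω 0 ∈ Set.Ico (0 : ℝ) 1)
    (c : Ω → ℝ)
    (hc : ∀ ω, c ω ∈ Set.Ico (0 : ℝ) 1 ∧ Int.fract (F ω (c ω)) = 0) :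
    ∀ x₀ ∈ Set.Ico (0 : ℝ) 1, ∀ (ω : Ω) (n : ℕ), 1 ≤ n →
      |(1 / n : ℝ) * iterLift σ F n ω x₀ - binFreq σ F c n ω x₀| < 1 / n := by
  intro x₀ hx₀ ω n hn
  have hsum : ∑ k ∈ Finset.range n, (⌊F (σ^[k] ω) (iterHat σ F k ω x₀)⌋ : ℝ) =
      ∑ k ∈ Finset.range n, rightInd F c (σ^[k] ω) (iterHat σ F k ω x₀) :=
    Finset.sum_congr rfl fun k _ => floor_eq_rightInd (hmono _) (by simpa using hdeg _ 0)
      (hstd _) (hc _).1 (hc _).2 (iterHat_mem_Ico σ hx₀ k ω)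
  have hdiff : (1 / n : ℝ) * iterLift σ F n ω x₀ - binFreq σ F c n ω x₀ =
      iterHat σ F n ω x₀ / n := by
    rw [iterLift_eq_iterHat_add_sum_floor σ hdeg, hsum, binFreq]
    ring
  have hn : (0 : ℝ) < n := by exact_mod_cast hn
  obtain ⟨hhat0, hhat1⟩ := iterHat_mem_Ico σ hx₀ n ω (F := F)
  rw [hdiff, abs_of_nonneg (div_nonneg hhat0 hn.le)]
  exact div_lt_div_of_pos_right hhat1 hn

/-- if `F` is the standard lift of the generator `f` of a random circle
homeomorphism over a measure-preserving system, then for every `x₀ ∈ [0,1)`, every `ω`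
and every `n ≥ 1`, `|(1/n) F^{(n)}_ω(x₀) − B_f(n, ω, x₀)| < 1/n`. -/
theorem binary_coding_error_bound
    {Ω : Type*} [MeasurableSpace Ω] (ℙ : Measure Ω) [IsProbabilityMeasure ℙ]
    (σ : Ω → Ω) (hσ : MeasurePreserving σ ℙ ℙ)
    (F : Ω → ℝ → ℝ) (hmeas : Measurable (Function.uncurry F))
    (hmono : ∀ ω, StrictMono (F ω)) (hcont : ∀ ω, Continuous (F ω))
    (hsurj : ∀ ω, Function.Surjective (F ω))
    (hdeg : ∀ ω (x : ℝ), F ω (x + 1) = F ω x + 1)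
    (hstd : ∀ ω, F ω 0 ∈ Set.Ico (0 : ℝ) 1)
    (c : Ω → ℝ)
    (hc : ∀ ω, c ω ∈ Set.Ico (0 : ℝ) 1 ∧ Int.fract (F ω (c ω)) = 0) :
    ∀ x₀ ∈ Set.Ico (0 : ℝ) 1, ∀ (ω : Ω) (n : ℕ), 1 ≤ n →
      |(1 / n : ℝ) * iterLift σ F n ω x₀ - binFreq σ F c n ω x₀| < 1 / n :=
  binary_coding_error_bound_general σ F hmono hdeg hstd c hc
end

section
/- Let (Ω, ℱ, ℙ, σ) be a measure-preserving dynamical system, let f : Ω → ℋ be the generator of a random circle homeomorphism such that f_ω has no fixed point for every ω ∈ Ω, and let F be the standard lift of f. Fix x₀ ∈ S¹ and suppose that for ℙ-almost every ω ∈ Ω the random rotation number ρ_F(ω) = lim_{n→∞} (F^(n)_ω(x₀') − x₀')/n exists, where x₀' ∈ [0,1) represents x₀. Then for every z ∈ S¹ and ℙ-almost every ω ∈ Ω, lim_{n→∞} V_f(n, ω, x₀, z) = ρ_F(ω). -/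
open MeasureTheory

/-- Membership of `x` in the positively oriented circular arc `[z, y)`, with all points
represented in `[0,1)`; `[z, z) = ∅`. -/
def inArc (z y x : ℝ) : Prop :=
  if z ≤ y then z ≤ x ∧ x < y else (z ≤ x ∨ x < y)

open Classical in
/-- The `n`-th visit frequency
`V_f(n, ω, x₀, z) = (1/n) #{1 ≤ i ≤ n : f^{(i)}_ω(x₀) ∈ [z, f_{σ^{i-1}ω}(z))}`,
with circle points represented in `[0,1)` and `f_ω = Int.fract ∘ F_ω` on `[0,1)`. -/
noncomputable def visitFreq {Ω : Type*} (σ : Ω → Ω) (F : Ω → ℝ → ℝ)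
    (n : ℕ) (ω : Ω) (x₀ z : ℝ) : ℝ :=
  (((Finset.Icc 1 n).filter fun i =>
      inArc z (Int.fract (F (σ^[i - 1] ω) z)) (iterHat σ F i ω x₀)).card : ℝ) / n

open Filter Topology

/-!
Let `X n = F^(n)_ω(x₀)` and `a n = ⌊X n - z⌋`. Since `f_ω` has no fixed point and `F` is the
standard lift, every displacement `F_ω x - x` lies in `(0, 1)`, so `a` increases by `0` or `1` at
each step, and by monotonicity of `F_{σⁿω}` it increases exactly when `f^(n+1)_ω(x₀)` lands in the
arc `[z, f_{σⁿω}(z))`. Hence `n · V_f(n, ω, x₀, z) = a n - a 0`, which differs from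
`X n - x₀` by less than `2`.
-/

open Set AddConstMap

namespace AddConstMap

variable (f : ℝ →+c[1, 1] ℝ)

theorem fract_apply_fract (x : ℝ) : Int.fract (f (Int.fract x)) = Int.fract (f x) := by
  rw [AddConstMapClass.map_fract, zsmul_one, Int.fract_sub_intCast]

theorem apply_ne_add_intCast (hfix : ∀ x ∈ Ico (0 : ℝ) 1, Int.fract (f x) ≠ x) (x : ℝ) (k : ℤ) :
    f x ≠ x + k := by
  intro hk
  have : f (Int.fract x) = Int.fract x + k := by
    rw [AddConstMapClass.map_fract, hk, zsmul_one, ← Int.self_sub_floor]; ring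
  exact hfix _ ⟨Int.fract_nonneg x, Int.fract_lt_one x⟩
    (by rw [this, Int.fract_add_intCast, Int.fract_fract])

/-- The displacement `f x - x` is continuous and avoids `ℤ`, so it stays in the unit interval
containing `f 0 - 0`. -/
theorem lt_apply_and_apply_lt_add_one (hcont : Continuous f) (h0 : f 0 ∈ Ico (0 : ℝ) 1)
    (hfix : ∀ x ∈ Ico (0 : ℝ) 1, Int.fract (f x) ≠ x) (x : ℝ) : x < f x ∧ f x < x + 1 := by
  have hg : Continuous fun y => f y - y := hcont.sub continuous_id
  have hint (y : ℝ) (k : ℤ) : f y - y ≠ k := fun h => f.apply_ne_add_intCast hfix y k (by linarith)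
  have hpos : 0 < f 0 - 0 := lt_of_le_of_ne (by linarith [h0.1]) (by simpa using (hint 0 0).symm)
  constructor
  · by_contra! h
    obtain ⟨y, hy⟩ := intermediate_value_univ x 0 hg ⟨(by linarith : f x - x ≤ 0), hpos.le⟩
    exact hint y 0 (by simpa using hy)
  · by_contra! h
    obtain ⟨y, hy⟩ := intermediate_value_univ 0 x hg
      ⟨(by linarith [h0.2] : f 0 - 0 ≤ 1), (by linarith : 1 ≤ f x - x)⟩
    exact hint y 1 (by simpa using hy)

theorem fract_apply_sub_lt_iff (hf : StrictMono f) (x z : ℝ) :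
    Int.fract (f x - z) < f z - z ↔ ⌊x - z⌋ < ⌊f x - z⌋ := by
  set m := ⌊f x - z⌋
  calc Int.fract (f x - z) < f z - z ↔ f x < f (z + m) := by
        rw [AddConstMapClass.map_add_int, ← Int.self_sub_floor]; constructor <;> intro <;> linarith
    _ ↔ x - z < m := by rw [hf.lt_iff_lt]; constructor <;> intro <;> linarith
    _ ↔ ⌊x - z⌋ < m := Int.floor_lt.symm

end AddConstMap

theorem Int.fract_sub_eq_ite {t z : ℝ} (ht : t ∈ Ico (0 : ℝ) 1) (hz : z ∈ Ico (0 : ℝ) 1) :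
    Int.fract (t - z) = if z ≤ t then t - z else t - z + 1 := by
  split_ifs with h
  · exact Int.fract_eq_self.2 ⟨by linarith, by linarith [hz.1, ht.2]⟩
  · rw [Int.fract_eq_iff]
    exact ⟨by linarith [ht.1, hz.2], by linarith, -1, by push_cast; ring⟩

theorem inArc_iff_fract_sub_lt {z w t : ℝ} (hz : z ∈ Ico (0 : ℝ) 1) (hw : w ∈ Ico (0 : ℝ) 1)
    (ht : t ∈ Ico (0 : ℝ) 1) : inArc z w t ↔ Int.fract (t - z) < Int.fract (w - z) := by
  rw [inArc, Int.fract_sub_eq_ite ht hz, Int.fract_sub_eq_ite hw hz]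
  split_ifs with hzw hzt hzt
  · exact ⟨fun h => by linarith [h.2], fun h => ⟨hzt, by linarith⟩⟩
  · exact iff_of_false (fun h => hzt h.1) (by linarith [ht.1, hw.2])
  · exact iff_of_true (.inl hzt) (by linarith [ht.2, hw.1])
  · rw [or_iff_right hzt]; constructor <;> intro <;> linarith

theorem inArc_fract_iff {z L : ℝ} (hz : z ∈ Ico (0 : ℝ) 1) (hzL : z < L) (hLz : L < z + 1)
    (y : ℝ) : inArc z (Int.fract L) (Int.fract y) ↔ Int.fract (y - z) < L - z := by
  have hfract_sub (x : ℝ) : Int.fract (Int.fract x - z) = Int.fract (x - z) := by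
    rw [← Int.self_sub_floor x, sub_right_comm, Int.fract_sub_intCast]
  have hL : Int.fract (L - z) = L - z := Int.fract_eq_self.2 ⟨by linarith, by linarith⟩
  rw [inArc_iff_fract_sub_lt hz ⟨Int.fract_nonneg L, Int.fract_lt_one L⟩
    ⟨Int.fract_nonneg y, Int.fract_lt_one y⟩, hfract_sub, hfract_sub, hL]

theorem card_filter_Icc_lt_eq_sub {a : ℕ → ℤ} (ha : ∀ n, a n ≤ a (n + 1) ∧ a (n + 1) ≤ a n + 1)
    (n : ℕ) : (((Finset.Icc 1 n).filter fun i => a (i - 1) < a i).card : ℤ) = a n - a 0 := by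
  induction n with
  | zero => simp
  | succ n ih =>
    rw [← Finset.insert_Icc_right_eq_Icc_add_one (by omega), Finset.filter_insert]
    obtain ⟨h₁, h₂⟩ := ha n
    simp only [Nat.add_sub_cancel]
    split_ifs with h
    · rw [Finset.card_insert_of_notMem (by simp)]; push_cast; omega
    · omega

theorem Filter.Tendsto.div_natCast_of_abs_sub_le {u v : ℕ → ℝ} {ρ C : ℝ}
    (hu : Tendsto (fun n => u n / n) atTop (𝓝 ρ)) (h : ∀ n, |v n - u n| ≤ C) :
    Tendsto (fun n => v n / n) atTop (𝓝 ρ) := by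
  have hdiff : Tendsto (fun n : ℕ => (v n - u n) / n) atTop (𝓝 0) :=
    tendsto_bdd_div_atTop_nhds_zero (b := -C) (B := C)
      (.of_forall fun n => (abs_le.1 (h n)).1) (.of_forall fun n => (abs_le.1 (h n)).2)
      tendsto_natCast_atTop_atTop
  simpa [← add_div] using hu.add hdiff

section RandomOrbit

variable {Ω : Type*} (σ : Ω → Ω) (F : Ω → ℝ → ℝ)

theorem iterLift_succ_apply' (n : ℕ) (ω : Ω) (x : ℝ) :
    iterLift σ F (n + 1) ω x = F (σ^[n] ω) (iterLift σ F n ω x) := by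
  induction n generalizing ω x with
  | zero => rfl
  | succ n ih => exact ih (σ ω) (F ω x)

variable {F} (hdeg : ∀ ω (x : ℝ), F ω (x + 1) = F ω x + 1)
include hdeg

theorem iterHat_fract (n : ℕ) (ω : Ω) (x : ℝ) :
    iterHat σ F n ω (Int.fract x) = Int.fract (iterLift σ F n ω x) := by
  induction n generalizing ω x with
  | zero => rfl
  | succ n ih =>
    have hfract : Int.fract (F ω (Int.fract x)) = Int.fract (F ω x) :=
      fract_apply_fract ⟨F ω, hdeg ω⟩ x
    simp only [iterHat, iterLift, hfract, ← ih]

theorem iterHat_succ (n : ℕ) (ω : Ω) (x : ℝ) :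
    iterHat σ F (n + 1) ω x = Int.fract (iterLift σ F (n + 1) ω x) :=
  iterHat_fract σ hdeg n (σ ω) (F ω x)

variable (hcont : ∀ ω, Continuous (F ω)) (hstd : ∀ ω, F ω 0 ∈ Ico (0 : ℝ) 1)
  (hnofix : ∀ ω, ∀ x ∈ Ico (0 : ℝ) 1, Int.fract (F ω x) ≠ x)
include hcont hstd hnofix

theorem iterLift_lt_iterLift_succ_lt_add_one (n : ℕ) (ω : Ω) (x : ℝ) :
    iterLift σ F n ω x < iterLift σ F (n + 1) ω x ∧
      iterLift σ F (n + 1) ω x < iterLift σ F n ω x + 1 := by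
  rw [iterLift_succ_apply']
  exact lt_apply_and_apply_lt_add_one ⟨F _, hdeg _⟩ (hcont _) (hstd _) (hnofix _) _

theorem inArc_iterHat_succ_iff (hmono : ∀ ω, StrictMono (F ω)) {z : ℝ} (hz : z ∈ Ico (0 : ℝ) 1)
    (n : ℕ) (ω : Ω) (x : ℝ) :
    inArc z (Int.fract (F (σ^[n] ω) z)) (iterHat σ F (n + 1) ω x) ↔
      ⌊iterLift σ F n ω x - z⌋ < ⌊iterLift σ F (n + 1) ω x - z⌋ := by
  let f : ℝ →+c[1, 1] ℝ := ⟨F (σ^[n] ω), hdeg _⟩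
  obtain ⟨hzf, hfz⟩ := f.lt_apply_and_apply_lt_add_one (hcont _) (hstd _) (hnofix _) z
  rw [iterHat_succ σ hdeg, iterLift_succ_apply']
  exact (inArc_fract_iff hz hzf hfz _).trans (f.fract_apply_sub_lt_iff (hmono _) _ z)

theorem visitFreq_eq (hmono : ∀ ω, StrictMono (F ω)) {z : ℝ} (hz : z ∈ Ico (0 : ℝ) 1)
    (n : ℕ) (ω : Ω) (x : ℝ) :
    visitFreq σ F n ω x z = ((⌊iterLift σ F n ω x - z⌋ - ⌊x - z⌋ : ℤ) : ℝ) / n := by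
  classical
  set a : ℕ → ℤ := fun n => ⌊iterLift σ F n ω x - z⌋
  have ha (n : ℕ) : a n ≤ a (n + 1) ∧ a (n + 1) ≤ a n + 1 := by
    obtain ⟨h₁, h₂⟩ := iterLift_lt_iterLift_succ_lt_add_one σ hdeg hcont hstd hnofix n ω x
    refine ⟨Int.floor_le_floor (by linarith), ?_⟩
    rw [← Int.floor_add_one]
    exact Int.floor_le_floor (by linarith)
  have hvisit : ∀ i ∈ Finset.Icc 1 n,
      inArc z (Int.fract (F (σ^[i - 1] ω) z)) (iterHat σ F i ω x) ↔ a (i - 1) < a i := by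
    intro i hi
    obtain ⟨k, rfl⟩ : ∃ k, i = k + 1 := ⟨i - 1, by grind⟩
    exact inArc_iterHat_succ_iff σ hdeg hcont hstd hnofix hmono hz k ω x
  rw [visitFreq, Finset.filter_congr hvisit]
  congr 1
  exact_mod_cast card_filter_Icc_lt_eq_sub ha n

end RandomOrbit

theorem visit_counting_limit_general
    {Ω : Type*} [MeasurableSpace Ω] (ℙ : Measure Ω)
    (σ : Ω → Ω)
    (F : Ω → ℝ → ℝ)
    (hmono : ∀ ω, StrictMono (F ω)) (hcont : ∀ ω, Continuous (F ω))
    (hdeg : ∀ ω (x : ℝ), F ω (x + 1) = F ω x + 1)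
    (hstd : ∀ ω, F ω 0 ∈ Set.Ico (0 : ℝ) 1)
    (hnofix : ∀ ω, ∀ x ∈ Set.Ico (0 : ℝ) 1, Int.fract (F ω x) ≠ x)
    (x₀ : ℝ)
    (ρ : Ω → ℝ)
    (hρ : ∀ᵐ ω ∂ℙ, Tendsto (fun n : ℕ => (iterLift σ F n ω x₀ - x₀) / n)
      atTop (𝓝 (ρ ω))) :
    ∀ z ∈ Set.Ico (0 : ℝ) 1,
      ∀ᵐ ω ∂ℙ, Tendsto (fun n : ℕ => visitFreq σ F n ω x₀ z) atTop (𝓝 (ρ ω)) := by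
  intro z hz
  filter_upwards [hρ] with ω hω
  simp only [visitFreq_eq σ hdeg hcont hstd hnofix hmono hz]
  refine hω.div_natCast_of_abs_sub_le (C := 2) fun n => ?_
  have h₁ := Int.floor_le (iterLift σ F n ω x₀ - z)
  have h₂ := Int.lt_floor_add_one (iterLift σ F n ω x₀ - z)
  have h₃ := Int.floor_le (x₀ - z)
  have h₄ := Int.lt_floor_add_one (x₀ - z)
  rw [abs_le]
  push_cast
  constructor <;> linarith

/-- let `F` be the standard lift of the generator `f` of a random circle
homeomorphism over a measure-preserving system, where each `f_ω` has no fixed point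
(i.e. `f̂_ω(x) ≠ x` for all `x ∈ [0,1)`).  Fix `x₀ ∈ [0,1)` (representing `x₀ ∈ S¹`) and
suppose that for ℙ-almost every `ω` the random rotation number
`ρ_F(ω) = lim_n (F^{(n)}_ω(x₀) − x₀)/n` exists.  Then for every `z ∈ S¹` (represented in
`[0,1)`) and ℙ-almost every `ω`, `lim_n V_f(n, ω, x₀, z) = ρ_F(ω)`. -/
theorem visit_counting_limit
    {Ω : Type*} [MeasurableSpace Ω] (ℙ : Measure Ω) [IsProbabilityMeasure ℙ]
    (σ : Ω → Ω) (hσ : MeasurePreserving σ ℙ ℙ)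
    (F : Ω → ℝ → ℝ) (hmeas : Measurable (Function.uncurry F))
    (hmono : ∀ ω, StrictMono (F ω)) (hcont : ∀ ω, Continuous (F ω))
    (hsurj : ∀ ω, Function.Surjective (F ω))
    (hdeg : ∀ ω (x : ℝ), F ω (x + 1) = F ω x + 1)
    (hstd : ∀ ω, F ω 0 ∈ Set.Ico (0 : ℝ) 1)
    (hnofix : ∀ ω, ∀ x ∈ Set.Ico (0 : ℝ) 1, Int.fract (F ω x) ≠ x)
    (x₀ : ℝ) (hx₀ : x₀ ∈ Set.Ico (0 : ℝ) 1)
    (ρ : Ω → ℝ)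
    (hρ : ∀ᵐ ω ∂ℙ, Tendsto (fun n : ℕ => (iterLift σ F n ω x₀ - x₀) / n)
      atTop (𝓝 (ρ ω))) :
    ∀ z ∈ Set.Ico (0 : ℝ) 1,
      ∀ᵐ ω ∂ℙ, Tendsto (fun n : ℕ => visitFreq σ F n ω x₀ z) atTop (𝓝 (ρ ω)) :=
  visit_counting_limit_general ℙ σ F hmono hcont hdeg hstd hnofix x₀ ρ hρ
end

section
/- Let (Ω, ℱ, ℙ, σ) be a measure-preserving dynamical system, let f : Ω → ℋ generate a random circle homeomorphism, and let F be an integrable lift of f, i.e. ∫_Ω ‖Δ_{F_ω}‖_∞ dℙ(ω) < ∞. Suppose (Li–Lu) that for ℙ-almost every ω the random rotation number ρ_F(ω) = lim_{n→∞} F^(n)_ω(0)/n exists and defines an integrable function on Ω, and set ρ̂(F) = ∫_Ω ρ_F dℙ. Then for every n ≥ 1, |(1/n) ∫_Ω F^(n)_ω(0) dℙ(ω) − ρ̂(F)| ≤ 1/n. -/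
open MeasureTheory Filter Topology

/-!
Put `a m = ∫ F^(m)_ω(0) dℙ`. Since `F^(m+k)_ω = F^(m)_{σ^k ω} ∘ F^(k)_ω` and every monotone
degree-one map `G` satisfies `|G x - x - G 0| ≤ 1`, invariance of `ℙ` makes `a` quasi-additive:
`|a (m + k) - a m - a k| ≤ 1`. Hence `|a (k n) - k a n| ≤ k - 1`, i.e. `a (k n) / (k n)` stays
within `1 / n` of `a n / n`, and letting `k → ∞` it remains to see `a m / m → ρ̂(F)`. This is
Vitali's convergence theorem: `|F^(m)_ω(0) / m|` is dominated by the Birkhoff average of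
`‖Δ_{F_ω}‖_∞`, and the Birkhoff averages of an integrable function are uniformly integrable.
-/

open scoped ENNReal

lemma abs_sub_sub_map_zero_le_one {φ : ℝ → ℝ} (hφ : Monotone φ)
    (hφ1 : ∀ x, φ (x + 1) = φ x + 1) (x : ℝ) : |φ x - x - φ 0| ≤ 1 := by
  let f : CircleDeg1Lift := ⟨⟨φ, hφ⟩, hφ1⟩
  have hfloor : φ 0 + ⌊x⌋ ≤ φ x := f.le_map_of_map_zero x
  have hceil : φ x ≤ φ 0 + ⌈x⌉ := f.map_le_of_map_zero x
  have := Int.sub_one_lt_floor x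
  have := Int.ceil_lt_add_one x
  rw [abs_le]
  constructor <;> linarith

lemma abs_sub_le_iSup_abs_sub {φ : ℝ → ℝ} (hφ : Monotone φ)
    (hφ1 : ∀ x, φ (x + 1) = φ x + 1) (x : ℝ) : |φ x - x| ≤ ⨆ y, |φ y - y| := by
  refine le_ciSup (f := fun y => |φ y - y|) ⟨|φ 0| + 1, ?_⟩ x
  rintro _ ⟨y, rfl⟩
  calc |φ y - y| = |(φ y - y - φ 0) + φ 0| := by rw [sub_add_cancel]
    _ ≤ |φ y - y - φ 0| + |φ 0| := abs_add_le _ _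
    _ ≤ |φ 0| + 1 := by linarith [abs_sub_sub_map_zero_le_one hφ hφ1 y]

namespace MeasureTheory

theorem UnifIntegrable.of_norm_le {α ι β γ : Type*} [MeasurableSpace α] {μ : Measure α}
    [NormedAddCommGroup β] [NormedAddCommGroup γ] {p : ℝ≥0∞}
    {f : ι → α → β} {g : ι → α → γ} (hg : UnifIntegrable g p μ)
    (hfg : ∀ i x, ‖f i x‖ ≤ ‖g i x‖) : UnifIntegrable f p μ := by
  intro ε hε
  obtain ⟨δ, hδ, hgδ⟩ := hg hε
  refine ⟨δ, hδ, fun i s hs hμs => (eLpNorm_mono fun x => ?_).trans (hgδ i s hs hμs)⟩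
  simp only [norm_indicator_eq_indicator_norm]
  exact Set.indicator_le_indicator (hfg i x)

theorem MeasurePreserving.identDistrib_comp {α β γ : Type*} [MeasurableSpace α]
    [MeasurableSpace β] [MeasurableSpace γ] {μ : Measure α} {ν : Measure β} {τ : α → β}
    (hτ : MeasurePreserving τ μ ν) {g : β → γ} (hg : AEMeasurable g ν) :
    ProbabilityTheory.IdentDistrib (g ∘ τ) g μ ν where
  aemeasurable_fst := (hτ.map_eq ▸ hg).comp_measurable hτ.measurable
  aemeasurable_snd := hg
  map_eq := by
    rw [← AEMeasurable.map_map_of_aemeasurable (hτ.map_eq ▸ hg) hτ.measurable.aemeasurable,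
      hτ.map_eq]

theorem MeasurePreserving.uniformIntegrable_birkhoffAverage {α E : Type*} [MeasurableSpace α]
    [NormedAddCommGroup E] [NormedSpace ℝ E] [MeasurableSpace E] [BorelSpace E]
    {μ : Measure α} [IsFiniteMeasure μ] {σ : α → α}
    (hσ : MeasurePreserving σ μ μ) {p : ℝ≥0∞} (hp : 1 ≤ p) (hp' : p ≠ ∞) {g : α → E}
    (hg : MemLp g p μ) : UniformIntegrable (birkhoffAverage ℝ σ g) p μ := by
  have hUI : UniformIntegrable (fun k => g ∘ σ^[k]) p μ :=
    ProbabilityTheory.MemLp.uniformIntegrable_of_identDistrib (j := 0) hp hp' hg fun k =>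
      (hσ.iterate k).identDistrib_comp hg.aestronglyMeasurable.aemeasurable
  convert uniformIntegrable_average hp hUI using 1
  ext n x
  simp [birkhoffAverage, birkhoffSum]

theorem MeasurePreserving.tendsto_integral_of_abs_le_birkhoffAverage
    {α : Type*} [MeasurableSpace α] {μ : Measure α} [IsFiniteMeasure μ] {σ : α → α}
    (hσ : MeasurePreserving σ μ μ) {D : α → ℝ} (hD : Integrable D μ) {f : ℕ → α → ℝ}
    (hf : ∀ n, AEStronglyMeasurable (f n) μ) (hfD : ∀ n x, |f n x| ≤ birkhoffAverage ℝ σ D n x)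
    {g : α → ℝ} (hg : Integrable g μ) (hfg : ∀ᵐ x ∂μ, Tendsto (fun n => f n x) atTop (𝓝 (g x))) :
    Tendsto (fun n => ∫ x, f n x ∂μ) atTop (𝓝 (∫ x, g x ∂μ)) := by
  have hUI := hσ.uniformIntegrable_birkhoffAverage le_rfl ENNReal.one_ne_top
    (memLp_one_iff_integrable.2 hD)
  have hfD' : ∀ n x, ‖f n x‖ ≤ ‖birkhoffAverage ℝ σ D n x‖ := fun n x =>
    (hfD n x).trans (le_abs_self _)
  refine tendsto_integral_of_L1' g hg.1 (Eventually.of_forall fun n =>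
    (memLp_one_iff_integrable.1 (hUI.memLp n)).mono (hf n) (ae_of_all _ (hfD' n))) ?_
  exact tendsto_Lp_finite_of_tendsto_ae le_rfl ENNReal.one_ne_top hf
    (memLp_one_iff_integrable.2 hg) (hUI.2.1.of_norm_le hfD') hfg

end MeasureTheory

section QuasiAdditive

variable {a : ℕ → ℝ} {C : ℝ}

lemma abs_succ_mul_sub_le_of_quasiAdditive (hadd : ∀ m k, |a (m + k) - a m - a k| ≤ C)
    (k n : ℕ) : |a ((k + 1) * n) - (k + 1) * a n| ≤ k * C := by
  induction k with
  | zero => simp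
  | succ k ih =>
    have hsplit : a ((k + 1 + 1) * n) - (↑(k + 1) + 1) * a n =
        (a ((k + 1) * n + n) - a ((k + 1) * n) - a n) + (a ((k + 1) * n) - (k + 1) * a n) := by
      rw [add_mul (k + 1) 1 n, one_mul]; push_cast; ring
    rw [hsplit]
    calc _ ≤ C + k * C := (abs_add_le _ _).trans (add_le_add (hadd _ _) ih)
      _ = (k + 1 : ℕ) * C := by push_cast; ring

lemma abs_one_div_mul_sub_le_of_quasiAdditive (hadd : ∀ m k, |a (m + k) - a m - a k| ≤ C)
    {L : ℝ} (hlim : Tendsto (fun m => a m / m) atTop (𝓝 L)) {n : ℕ} (hn : 1 ≤ n) :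
    |1 / n * a n - L| ≤ C / n := by
  have hC : 0 ≤ C := (abs_nonneg _).trans (hadd 0 0)
  have hnpos : (0 : ℝ) < n := by exact_mod_cast hn
  have hsub : Tendsto (fun k : ℕ => a ((k + 1) * n) / ((k + 1) * n : ℕ)) atTop (𝓝 L) :=
    hlim.comp <|
      tendsto_atTop_mono (fun k => Nat.le_mul_of_pos_right _ hn) (tendsto_add_atTop_nat 1)
  have hbound : ∀ k : ℕ, |a ((k + 1) * n) / ((k + 1) * n : ℕ) - 1 / n * a n| ≤ C / n := by
    intro k
    have hk : (0 : ℝ) < k + 1 := by positivity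
    have hrw : a ((k + 1) * n) / ((k + 1) * n : ℕ) - 1 / n * a n =
        (a ((k + 1) * n) - (k + 1) * a n) / ((k + 1) * n) := by
      push_cast; field_simp
    rw [hrw, abs_div, abs_of_pos (mul_pos hk hnpos), div_le_div_iff₀ (mul_pos hk hnpos) hnpos]
    nlinarith [abs_succ_mul_sub_le_of_quasiAdditive hadd k n]
  rw [abs_sub_comm]
  exact le_of_tendsto ((hsub.sub_const _).abs) (Eventually.of_forall hbound)

end QuasiAdditive

section iterLift

variable {Ω : Type*} {σ : Ω → Ω} {F : Ω → ℝ → ℝ} {D : Ω → ℝ}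

lemma iterLift_add (m n : ℕ) (ω : Ω) (x : ℝ) :
    iterLift σ F (m + n) ω x = iterLift σ F m (σ^[n] ω) (iterLift σ F n ω x) := by
  induction n generalizing ω x with
  | zero => rfl
  | succ n ih => exact ih (σ ω) (F ω x)

lemma monotone_iterLift (hF : ∀ ω, Monotone (F ω)) (n : ℕ) (ω : Ω) :
    Monotone (iterLift σ F n ω) := by
  induction n generalizing ω with
  | zero => exact monotone_id
  | succ n ih => exact (ih (σ ω)).comp (hF ω)

lemma iterLift_add_one (hF : ∀ ω x, F ω (x + 1) = F ω x + 1) (n : ℕ) (ω : Ω) (x : ℝ) :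
    iterLift σ F n ω (x + 1) = iterLift σ F n ω x + 1 := by
  induction n generalizing ω x with
  | zero => rfl
  | succ n ih => exact (congrArg _ (hF ω x)).trans (ih (σ ω) (F ω x))

lemma abs_iterLift_sub_le_birkhoffSum (hD : ∀ ω x, |F ω x - x| ≤ D ω)
    (n : ℕ) (ω : Ω) (x : ℝ) : |iterLift σ F n ω x - x| ≤ birkhoffSum σ D n ω := by
  induction n generalizing ω x with
  | zero => simp [iterLift]
  | succ n ih =>
    calc |iterLift σ F n (σ ω) (F ω x) - x|
        ≤ |iterLift σ F n (σ ω) (F ω x) - F ω x| + |F ω x - x| := abs_sub_le _ _ _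
      _ ≤ birkhoffSum σ D n (σ ω) + D ω := add_le_add (ih _ _) (hD ω x)
      _ = birkhoffSum σ D (n + 1) ω := by rw [birkhoffSum_succ', add_comm]

lemma abs_iterLift_div_le_birkhoffAverage (hD : ∀ ω x, |F ω x - x| ≤ D ω) (n : ℕ) (ω : Ω) :
    |iterLift σ F n ω 0 / n| ≤ birkhoffAverage ℝ σ D n ω := by
  rw [birkhoffAverage, smul_eq_mul, abs_div, Nat.abs_cast, div_eq_inv_mul]
  gcongr
  simpa using abs_iterLift_sub_le_birkhoffSum hD n ω 0

lemma measurable_uncurry_iterLift [MeasurableSpace Ω] (hσ : Measurable σ)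
    (hF : Measurable (Function.uncurry F)) (n : ℕ) :
    Measurable (Function.uncurry (iterLift σ F n)) := by
  induction n with
  | zero => exact measurable_snd
  | succ n ih => exact ih.comp ((hσ.comp measurable_fst).prodMk hF)

end iterLift

section IntegralIterLift

variable {Ω : Type*} [MeasurableSpace Ω] {μ : Measure Ω} {σ : Ω → Ω} {F : Ω → ℝ → ℝ}
  {D : Ω → ℝ}

lemma integrable_iterLift [IsFiniteMeasure μ] (hσ : MeasurePreserving σ μ μ)
    (hF : Measurable (Function.uncurry F)) (hDint : Integrable D μ)
    (hD : ∀ ω x, |F ω x - x| ≤ D ω) (n : ℕ) (x : ℝ) :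
    Integrable (fun ω => iterLift σ F n ω x) μ := by
  have hsum : Integrable (birkhoffSum σ D n) μ :=
    integrable_finsetSum _ fun k _ => (hσ.iterate k).integrable_comp_of_integrable hDint
  refine (hsum.add (integrable_const |x|)).mono'
    ((measurable_uncurry_iterLift hσ.measurable hF n).comp
      (measurable_id.prodMk measurable_const)).aestronglyMeasurable (ae_of_all _ fun ω => ?_)
  have := abs_iterLift_sub_le_birkhoffSum (σ := σ) hD n ω x
  rw [Real.norm_eq_abs, Pi.add_apply]
  linarith [abs_sub_abs_le_abs_sub (iterLift σ F n ω x) x]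

lemma abs_integral_iterLift_add_sub_le [IsProbabilityMeasure μ] (hσ : MeasurePreserving σ μ μ)
    (hF : Measurable (Function.uncurry F)) (hFmono : ∀ ω, Monotone (F ω))
    (hF1 : ∀ ω x, F ω (x + 1) = F ω x + 1) (hDint : Integrable D μ)
    (hD : ∀ ω x, |F ω x - x| ≤ D ω) (m k : ℕ) :
    |∫ ω, iterLift σ F (m + k) ω 0 ∂μ - ∫ ω, iterLift σ F m ω 0 ∂μ
      - ∫ ω, iterLift σ F k ω 0 ∂μ| ≤ 1 := by
  have hint := integrable_iterLift hσ hF hDint hD (x := 0)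
  have hshift : ∫ ω, iterLift σ F m (σ^[k] ω) 0 ∂μ = ∫ ω, iterLift σ F m ω 0 ∂μ :=
    ((hσ.iterate k).identDistrib_comp (hint m).aemeasurable).integral_eq
  have hpoint : ∀ ω, |iterLift σ F (m + k) ω 0 - iterLift σ F k ω 0
      - iterLift σ F m (σ^[k] ω) 0| ≤ 1 := fun ω => by
    rw [iterLift_add]
    exact abs_sub_sub_map_zero_le_one (monotone_iterLift hFmono m _) (iterLift_add_one hF1 m _) _
  have hsplit : ∫ ω, (iterLift σ F (m + k) ω 0 - iterLift σ F k ω 0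
      - iterLift σ F m (σ^[k] ω) 0) ∂μ = ∫ ω, iterLift σ F (m + k) ω 0 ∂μ
        - ∫ ω, iterLift σ F k ω 0 ∂μ - ∫ ω, iterLift σ F m (σ^[k] ω) 0 ∂μ := by
    rw [integral_sub ?_ ?_, integral_sub (hint _) (hint k)]
    · exact (hint _).sub (hint k)
    · exact (hσ.iterate k).integrable_comp_of_integrable (hint m)
  rw [← hshift, sub_right_comm, ← hsplit]
  simpa using norm_integral_le_of_norm_le_const (μ := μ)
    (ae_of_all _ fun ω => (Real.norm_eq_abs _).trans_le (hpoint ω))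

end IntegralIterLift

theorem mean_rotation_error_bound_general
    {Ω : Type*} [MeasurableSpace Ω] (ℙ : Measure Ω) [IsProbabilityMeasure ℙ]
    (σ : Ω → Ω) (hσ : MeasurePreserving σ ℙ ℙ)
    (F : Ω → ℝ → ℝ) (hmeas : Measurable (Function.uncurry F))
    (hmono : ∀ ω, StrictMono (F ω))
    (hdeg : ∀ ω (x : ℝ), F ω (x + 1) = F ω x + 1)
    (hint : Integrable (fun ω => ⨆ x : ℝ, |F ω x - x|) ℙ)
    (ρ : Ω → ℝ) (hρint : Integrable ρ ℙ)
    (hρ : ∀ᵐ ω ∂ℙ, Tendsto (fun n : ℕ => iterLift σ F n ω 0 / n) atTop (𝓝 (ρ ω))) :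
    ∀ n : ℕ, 1 ≤ n →
      |(1 / n : ℝ) * (∫ ω, iterLift σ F n ω 0 ∂ℙ) - ∫ ω, ρ ω ∂ℙ| ≤ 1 / n := by
  intro n hn
  have hF : ∀ ω, Monotone (F ω) := fun ω => (hmono ω).monotone
  have hD : ∀ ω x, |F ω x - x| ≤ ⨆ y : ℝ, |F ω y - y| := fun ω =>
    abs_sub_le_iSup_abs_sub (hF ω) (hdeg ω)
  have hlim : Tendsto (fun m : ℕ => (∫ ω, iterLift σ F m ω 0 ∂ℙ) / m) atTop
      (𝓝 (∫ ω, ρ ω ∂ℙ)) := by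
    simp_rw [← integral_div]
    exact hσ.tendsto_integral_of_abs_le_birkhoffAverage hint
      (fun m => ((integrable_iterLift hσ hmeas hint hD m 0).div_const _).aestronglyMeasurable)
      (abs_iterLift_div_le_birkhoffAverage hD) hρint hρ
  exact abs_one_div_mul_sub_le_of_quasiAdditive
    (abs_integral_iterLift_add_sub_le hσ hmeas hF hdeg hint hD) hlim hn

/-- let `F` be an integrable lift of a random circle homeomorphism over a
measure-preserving system (`∫ ‖Δ_{F_ω}‖_∞ dℙ(ω) < ∞`).  Suppose (Li–Lu) that for
ℙ-almost every `ω` the random rotation number `ρ_F(ω) = lim_n F^{(n)}_ω(0)/n` exists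
and that `ρ_F` is integrable, and set `ρ̂(F) = ∫ ρ_F dℙ`.  Then for every `n ≥ 1`,
`|(1/n) ∫ F^{(n)}_ω(0) dℙ(ω) − ρ̂(F)| ≤ 1/n`. -/
theorem mean_rotation_error_bound
    {Ω : Type*} [MeasurableSpace Ω] (ℙ : Measure Ω) [IsProbabilityMeasure ℙ]
    (σ : Ω → Ω) (hσ : MeasurePreserving σ ℙ ℙ)
    (F : Ω → ℝ → ℝ) (hmeas : Measurable (Function.uncurry F))
    (hmono : ∀ ω, StrictMono (F ω)) (hcont : ∀ ω, Continuous (F ω))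
    (hsurj : ∀ ω, Function.Surjective (F ω))
    (hdeg : ∀ ω (x : ℝ), F ω (x + 1) = F ω x + 1)
    (hint : Integrable (fun ω => ⨆ x : ℝ, |F ω x - x|) ℙ)
    (ρ : Ω → ℝ) (hρint : Integrable ρ ℙ)
    (hρ : ∀ᵐ ω ∂ℙ, Tendsto (fun n : ℕ => iterLift σ F n ω 0 / n) atTop (𝓝 (ρ ω))) :
    ∀ n : ℕ, 1 ≤ n →
      |(1 / n : ℝ) * (∫ ω, iterLift σ F n ω 0 ∂ℙ) - ∫ ω, ρ ω ∂ℙ| ≤ 1 / n :=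
  mean_rotation_error_bound_general ℙ σ hσ F hmeas hmono hdeg hint ρ hρint hρ
end
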